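/- Let A be a commutative ring and r ≥ 0 an integer. Suppose given a commutative diagram of A-modules with exact rows F →^α M →^β N → 0 and F' →^{α'} M' →^{β'} N' → 0, together with vertical maps h : F → F', f : M → M', g : N → N' making the diagram commute, where F and F' are free A-modules of rank s ≤ r. Let φ : (⋀^{r−s}_A N) ⊗_A (⋀^s_A F) → ⋀^r_A M and φ' : (⋀^{r−s}_A N') ⊗_A (⋀^s_A F') → ⋀^r_A M' be the unique maps satisfying φ((⋀^{r−s}β)(a) ⊗ b) = a ∧ (⋀^s α)(b) and φ'((⋀^{r−s}β')(a') ⊗ b') = a' ∧ (⋀^s α')(b'). Then (⋀^r f) ∘ φ = φ' ∘ ((⋀^{r−s} g) ⊗ (⋀^s h)). -/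

import Mathlib

/-! Since `⋀^{r-s} β` is surjective, both sides are determined by their values on the tensors
`(⋀^{r-s} β)(a) ⊗ b`. There both equal `(⋀^{r-s} f)(a) ∧ (⋀^s α')((⋀^s h)(b))`: `⋀ f` is
multiplicative on the exterior algebra, and functoriality of `⋀` turns the two commuting
squares into `⋀ f ∘ ⋀ α = ⋀ α' ∘ ⋀ h` and `⋀ g ∘ ⋀ β = ⋀ β' ∘ ⋀ f`. -/

open ExteriorAlgebra TensorProduct

/-- The map induced by a linear map `f : M →ₗ[R] N` on `n`-th exterior powers. -/
noncomputable def expMap {R : Type*} [CommRing R] {M N : Type*} [AddCommGroup M] [Module R M]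
    [AddCommGroup N] [Module R N] (n : ℕ) (f : M →ₗ[R] N) :
    ⋀[R]^n M →ₗ[R] ⋀[R]^n N :=
  (ExteriorAlgebra.map f).toLinearMap.restrict (p := ⋀[R]^n M) (q := ⋀[R]^n N)
    (by
      intro x hx
      rw [← ExteriorAlgebra.ιMulti_span_fixedDegree] at hx
      induction hx using Submodule.span_induction with
      | mem y hy =>
          obtain ⟨v, rfl⟩ := hy
          show ExteriorAlgebra.map f (ExteriorAlgebra.ιMulti R n v) ∈ _
          rw [ExteriorAlgebra.map_apply_ιMulti]
          exact ExteriorAlgebra.ιMulti_range R n (Set.mem_range_self _)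
      | zero => simp
      | add y z _ _ hy hz => simpa [map_add] using Submodule.add_mem _ hy hz
      | smul a y _ hy => simpa [map_smul] using Submodule.smul_mem _ a hy)

section

variable {R : Type*} [CommRing R] {M N P : Type*} [AddCommGroup M] [Module R M]
  [AddCommGroup N] [Module R N] [AddCommGroup P] [Module R P]

lemma expMap_eq_map (n : ℕ) (f : M →ₗ[R] N) : expMap n f = exteriorPower.map n f := by
  ext v
  simp only [LinearMap.compAlternatingMap_apply, exteriorPower.map_apply_ιMulti,
    exteriorPower.ιMulti_apply_coe]
  exact ExteriorAlgebra.map_apply_ιMulti f v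

lemma expMap_comp_apply (n : ℕ) (f : M →ₗ[R] N) (g : N →ₗ[R] P) (x : ⋀[R]^n M) :
    expMap n g (expMap n f x) = expMap n (g ∘ₗ f) x := by
  simp only [expMap_eq_map, exteriorPower.map_comp, LinearMap.comp_apply]

lemma expMap_surjective (n : ℕ) {f : M →ₗ[R] N} (hf : Function.Surjective f) :
    Function.Surjective (expMap n f) := by
  rw [expMap_eq_map]
  exact exteriorPower.map_surjective hf

def wedge {p q n : ℕ} (hpqn : p + q = n) (a : ⋀[R]^p M) (b : ⋀[R]^q M) : ⋀[R]^n M :=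
  ⟨a * b, hpqn ▸ SetLike.mul_mem_graded a.2 b.2⟩

lemma expMap_wedge {p q n : ℕ} (hpqn : p + q = n) (f : M →ₗ[R] N) (a : ⋀[R]^p M)
    (b : ⋀[R]^q M) : expMap n f (wedge hpqn a b) = wedge hpqn (expMap p f a) (expMap q f b) :=
  Subtype.ext (map_mul (ExteriorAlgebra.map f) (a : ExteriorAlgebra R M) b)

end

theorem stark_systems_stmt1_general (A : Type*) [CommRing A] (F M N F' M' N' : Type*)
    [AddCommGroup F] [Module A F] [AddCommGroup M] [Module A M] [AddCommGroup N] [Module A N]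
    [AddCommGroup F'] [Module A F'] [AddCommGroup M'] [Module A M']
    [AddCommGroup N'] [Module A N']
    (s r : ℕ) (hsr : s ≤ r)
    (α : F →ₗ[A] M) (β : M →ₗ[A] N) (α' : F' →ₗ[A] M') (β' : M' →ₗ[A] N')
    (h : F →ₗ[A] F') (f : M →ₗ[A] M') (g : N →ₗ[A] N')
    (hsurj : Function.Surjective β)
    (hcomm₁ : f ∘ₗ α = α' ∘ₗ h) (hcomm₂ : g ∘ₗ β = β' ∘ₗ f)
    (φ : (⋀[A]^(r - s) N) ⊗[A] (⋀[A]^s F) →ₗ[A] ⋀[A]^r M)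
    (hφ : ∀ (a : ⋀[A]^(r - s) M) (b : ⋀[A]^s F) (m : ⋀[A]^r M),
      (m : ExteriorAlgebra A M) =
          (a : ExteriorAlgebra A M) * ((expMap s α b : ⋀[A]^s M) : ExteriorAlgebra A M) →
      φ (expMap (r - s) β a ⊗ₜ[A] b) = m)
    (φ' : (⋀[A]^(r - s) N') ⊗[A] (⋀[A]^s F') →ₗ[A] ⋀[A]^r M')
    (hφ' : ∀ (a' : ⋀[A]^(r - s) M') (b' : ⋀[A]^s F') (m' : ⋀[A]^r M'),
      (m' : ExteriorAlgebra A M') =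
          (a' : ExteriorAlgebra A M') * ((expMap s α' b' : ⋀[A]^s M') : ExteriorAlgebra A M') →
      φ' (expMap (r - s) β' a' ⊗ₜ[A] b') = m') :
    (expMap r f) ∘ₗ φ = φ' ∘ₗ (TensorProduct.map (expMap (r - s) g) (expMap s h)) := by
  have hrs : r - s + s = r := Nat.sub_add_cancel hsr
  refine TensorProduct.ext' fun a b => ?_
  obtain ⟨a, rfl⟩ := expMap_surjective (r - s) hsurj a
  calc expMap r f (φ (expMap (r - s) β a ⊗ₜ b))
      = expMap r f (wedge hrs a (expMap s α b)) :=
      congrArg (expMap r f) (hφ a b (wedge hrs a _) rfl)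
    _ = wedge hrs (expMap (r - s) f a) (expMap s α' (expMap s h b)) := by
      rw [expMap_wedge, expMap_comp_apply, hcomm₁, expMap_comp_apply]
    _ = φ' (expMap (r - s) β' (expMap (r - s) f a) ⊗ₜ expMap s h b) :=
      (hφ' _ _ (wedge hrs _ (expMap s α' _)) rfl).symm
    _ = φ' (expMap (r - s) g (expMap (r - s) β a) ⊗ₜ expMap s h b) := by
      rw [expMap_comp_apply, expMap_comp_apply, hcomm₂]

/-- Lemma 2.2.  Given a commutative diagram of `A`-modules with exact rows
`F →^α M →^β N → 0` and `F' →^{α'} M' →^{β'} N' → 0`, vertical maps `h : F → F'`,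
`f : M → M'`, `g : N → N'`, where `F`, `F'` are free of rank `s ≤ r`, and given the unique maps
`φ : (⋀^{r-s} N) ⊗ (⋀^s F) → ⋀^r M` and `φ' : (⋀^{r-s} N') ⊗ (⋀^s F') → ⋀^r M'` with
`φ((⋀^{r-s}β)(a) ⊗ b) = a ∧ (⋀^s α)(b)` and `φ'((⋀^{r-s}β')(a') ⊗ b') = a' ∧ (⋀^s α')(b')`,
we have `(⋀^r f) ∘ φ = φ' ∘ ((⋀^{r-s} g) ⊗ (⋀^s h))`. -/
theorem stark_systems_stmt1 (A : Type*) [CommRing A] (F M N F' M' N' : Type*)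
    [AddCommGroup F] [Module A F] [AddCommGroup M] [Module A M] [AddCommGroup N] [Module A N]
    [AddCommGroup F'] [Module A F'] [AddCommGroup M'] [Module A M']
    [AddCommGroup N'] [Module A N']
    (s r : ℕ) (hsr : s ≤ r) (bF : Module.Basis (Fin s) A F) (bF' : Module.Basis (Fin s) A F')
    (α : F →ₗ[A] M) (β : M →ₗ[A] N) (α' : F' →ₗ[A] M') (β' : M' →ₗ[A] N')
    (h : F →ₗ[A] F') (f : M →ₗ[A] M') (g : N →ₗ[A] N')
    (hexact : Function.Exact α β) (hsurj : Function.Surjective β)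
    (hexact' : Function.Exact α' β') (hsurj' : Function.Surjective β')
    (hcomm₁ : f ∘ₗ α = α' ∘ₗ h) (hcomm₂ : g ∘ₗ β = β' ∘ₗ f)
    (φ : (⋀[A]^(r - s) N) ⊗[A] (⋀[A]^s F) →ₗ[A] ⋀[A]^r M)
    (hφ : ∀ (a : ⋀[A]^(r - s) M) (b : ⋀[A]^s F) (m : ⋀[A]^r M),
      (m : ExteriorAlgebra A M) =
          (a : ExteriorAlgebra A M) * ((expMap s α b : ⋀[A]^s M) : ExteriorAlgebra A M) →
      φ (expMap (r - s) β a ⊗ₜ[A] b) = m)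
    (φ' : (⋀[A]^(r - s) N') ⊗[A] (⋀[A]^s F') →ₗ[A] ⋀[A]^r M')
    (hφ' : ∀ (a' : ⋀[A]^(r - s) M') (b' : ⋀[A]^s F') (m' : ⋀[A]^r M'),
      (m' : ExteriorAlgebra A M') =
          (a' : ExteriorAlgebra A M') * ((expMap s α' b' : ⋀[A]^s M') : ExteriorAlgebra A M') →
      φ' (expMap (r - s) β' a' ⊗ₜ[A] b') = m') :
    (expMap r f) ∘ₗ φ = φ' ∘ₗ (TensorProduct.map (expMap (r - s) g) (expMap s h)) :=
  stark_systems_stmt1_general A F M N F' M' N' s r hsr α β α' β' h f g hsurj hcomm₁ hcomm₂ φ hφ φ'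
    hφ'
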